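/- For r > 0 and λ ∈ (0, 1/2], define I_r(λ) = ∫_0^∞ e^{-t} t^{r/2 - 1} · (λ/(2√t)) / (1 + λ/(2√t)) dt. Then: (i) if 0 < r < 1 there is c(r) with I_r(λ) ≤ c(r) λ^r for all λ ∈ (0, 1/2]; (ii) if r = 1 there is c with I_1(λ) ≤ c λ log(1/λ) for all λ ∈ (0, 1/2]; (iii) if r > 1 there is c(r) with I_r(λ) ≤ c(r) λ for all λ ∈ (0, 1/2]. -/

import Mathlib

/-!
Write the integrand as `e^{-t} t^{r/2-1} φ(λ/(2√t))` with `φ(x) = x/(1+x) ≤ min(1, x)`.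
Near the origin use `φ ≤ 1`, far away use `φ(x) ≤ x`, which turns the integrand into
`(λ/2) e^{-t} t^{r/2-3/2}`. For `r > 1` the second bound alone gives `(λ/2) Γ((r-1)/2)`.
Otherwise split at `t = λ²`: the piece `∫_0^{λ²} t^{r/2-1}` is `(2/r) λ^r`, and the tail
`(λ/2) ∫_{λ²}^∞ t^{r/2-3/2}` is `λ^r/(1-r)` when `r < 1`, while for `r = 1` it is
`(λ/2) ∫_{λ²}^1 dt/t = λ log(1/λ)` plus an `O(λ)` contribution from `[1, ∞)`.
-/

open MeasureTheory

/-- `I_r(λ) = ∫_0^∞ e^{-t} t^{r/2-1} (λ/(2√t))/(1+λ/(2√t)) dt`. -/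
noncomputable def Ir (r lam : ℝ) : ℝ :=
  ∫ t in Set.Ioi (0:ℝ), Real.exp (-t) * t ^ (r / 2 - 1) *
    ((lam / (2 * Real.sqrt t)) / (1 + lam / (2 * Real.sqrt t)))

open Set Real

lemma div_one_add_le_one {x : ℝ} (hx : 0 ≤ x) : x / (1 + x) ≤ 1 :=
  (div_le_one (by linarith)).mpr (by linarith)

lemma div_one_add_le_self {x : ℝ} (hx : 0 ≤ x) : x / (1 + x) ≤ x :=
  div_le_self hx (by linarith)

lemma setIntegral_Ioi_eq_Ioc_add_Ioi {μ : Measure ℝ} {f : ℝ → ℝ} {a b : ℝ} (hab : a ≤ b)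
    (hf : IntegrableOn f (Ioi a) μ) :
    ∫ t in Ioi a, f t ∂μ = (∫ t in Ioc a b, f t ∂μ) + ∫ t in Ioi b, f t ∂μ := by
  rw [← Ioc_union_Ioi_eq_Ioi hab, setIntegral_union Ioc_disjoint_Ioi_same measurableSet_Ioi
    (hf.mono_set Ioc_subset_Ioi_self) (hf.mono_set (Ioi_subset_Ioi hab))]

noncomputable def IrIntegrand (r lam t : ℝ) : ℝ :=
  exp (-t) * t ^ (r / 2 - 1) * ((lam / (2 * √t)) / (1 + lam / (2 * √t)))

lemma Ir_eq_integral_IrIntegrand (r lam : ℝ) :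
    Ir r lam = ∫ t in Ioi 0, IrIntegrand r lam t := rfl

lemma measurable_IrIntegrand (r lam : ℝ) : Measurable (IrIntegrand r lam) := by
  have h : Measurable fun t : ℝ => lam / (2 * √t) :=
    (measurable_const.mul continuous_sqrt.measurable).const_div lam
  exact ((measurable_exp.comp measurable_neg).mul (measurable_id.pow_const _)).mul
    (h.div (measurable_const.add h))

section IrIntegrand

variable {r lam : ℝ}

lemma IrIntegrand_nonneg (hlam : 0 ≤ lam) {t : ℝ} (ht : 0 < t) : 0 ≤ IrIntegrand r lam t := by
  unfold IrIntegrand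
  positivity

lemma IrIntegrand_le_gammaIntegrand (hlam : 0 ≤ lam) {t : ℝ} (ht : 0 < t) :
    IrIntegrand r lam t ≤ exp (-t) * t ^ (r / 2 - 1) :=
  mul_le_of_le_one_right (by positivity) (div_one_add_le_one (by positivity))

lemma IrIntegrand_le_rpow (hlam : 0 ≤ lam) {t : ℝ} (ht : 0 < t) :
    IrIntegrand r lam t ≤ t ^ (r / 2 - 1) :=
  (IrIntegrand_le_gammaIntegrand hlam ht).trans <|
    mul_le_of_le_one_left (by positivity) (exp_le_one_iff.mpr (by linarith))

lemma IrIntegrand_le_mul_gammaIntegrand (hlam : 0 ≤ lam) {t : ℝ} (ht : 0 < t) :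
    IrIntegrand r lam t ≤ lam / 2 * (exp (-t) * t ^ (r / 2 - 3 / 2)) := by
  have hsplit : t ^ (r / 2 - 1) = t ^ (r / 2 - 3 / 2) * √t := by
    rw [sqrt_eq_rpow, ← rpow_add ht]
    ring_nf
  have hsqrt : √t ≠ 0 := (sqrt_pos.mpr ht).ne'
  calc IrIntegrand r lam t
      ≤ exp (-t) * t ^ (r / 2 - 1) * (lam / (2 * √t)) :=
        mul_le_mul_of_nonneg_left (div_one_add_le_self (by positivity)) (by positivity)
    _ = lam / 2 * (exp (-t) * t ^ (r / 2 - 3 / 2)) := by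
        rw [hsplit]
        field_simp

lemma IrIntegrand_le_mul_rpow (hlam : 0 ≤ lam) {t : ℝ} (ht : 0 < t) :
    IrIntegrand r lam t ≤ lam / 2 * t ^ (r / 2 - 3 / 2) :=
  (IrIntegrand_le_mul_gammaIntegrand hlam ht).trans <| mul_le_mul_of_nonneg_left
    (mul_le_of_le_one_left (by positivity) (exp_le_one_iff.mpr (by linarith))) (by positivity)

lemma integrableOn_IrIntegrand (hr : 0 < r) (hlam : 0 ≤ lam) :
    IntegrableOn (IrIntegrand r lam) (Ioi 0) := by
  refine Integrable.mono (GammaIntegral_convergent (half_pos hr))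
    (measurable_IrIntegrand r lam).aestronglyMeasurable ?_
  filter_upwards [self_mem_ae_restrict measurableSet_Ioi] with t (ht : 0 < t)
  rw [norm_of_nonneg (IrIntegrand_nonneg hlam ht), norm_of_nonneg (by positivity)]
  exact IrIntegrand_le_gammaIntegrand hlam ht

lemma Ir_le_of_one_lt (hr : 1 < r) (hlam : 0 ≤ lam) :
    Ir r lam ≤ lam / 2 * Gamma (r / 2 - 1 / 2) := by
  have hs : 0 < r / 2 - 1 / 2 := by linarith
  have hexp : r / 2 - 1 / 2 - 1 = r / 2 - 3 / 2 := by ring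
  rw [Gamma_eq_integral hs, ← integral_const_mul, hexp]
  refine setIntegral_mono_of_nonneg (fun t ht => IrIntegrand_nonneg hlam ht)
    (fun t ht => IrIntegrand_le_mul_gammaIntegrand hlam ht) ?_
  have h := (GammaIntegral_convergent hs).const_mul (lam / 2)
  rw [hexp] at h
  exact h

lemma setIntegral_IrIntegrand_Ioc_zero_le (hr : 0 < r) (hlam : 0 ≤ lam) {b : ℝ} (hb : 0 < b) :
    ∫ t in Ioc 0 b, IrIntegrand r lam t ≤ b ^ (r / 2) / (r / 2) := by
  have hp : -1 < r / 2 - 1 := by linarith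
  calc ∫ t in Ioc 0 b, IrIntegrand r lam t ≤ ∫ t in Ioc 0 b, t ^ (r / 2 - 1) :=
        setIntegral_mono_of_nonneg (fun t ht => IrIntegrand_nonneg hlam ht.1)
          (fun t ht => IrIntegrand_le_rpow hlam ht.1)
          (intervalIntegral.intervalIntegrable_rpow' hp).1
    _ = b ^ (r / 2) / (r / 2) := by
        rw [← intervalIntegral.integral_of_le hb.le, integral_rpow (Or.inl hp),
          zero_rpow (by linarith), sub_zero, sub_add_cancel]

lemma setIntegral_IrIntegrand_Ioi_le_of_lt_one (hr : r < 1) (hlam : 0 ≤ lam) {b : ℝ}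
    (hb : 0 < b) :
    ∫ t in Ioi b, IrIntegrand r lam t ≤ lam / 2 * (b ^ (r / 2 - 1 / 2) / (1 / 2 - r / 2)) := by
  have hp : r / 2 - 3 / 2 < -1 := by linarith
  calc ∫ t in Ioi b, IrIntegrand r lam t ≤ ∫ t in Ioi b, lam / 2 * t ^ (r / 2 - 3 / 2) :=
        setIntegral_mono_of_nonneg (fun t ht => IrIntegrand_nonneg hlam (hb.trans ht))
          (fun t ht => IrIntegrand_le_mul_rpow hlam (hb.trans ht))
          ((integrableOn_Ioi_rpow_of_lt hp hb).const_mul _)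
    _ = lam / 2 * (b ^ (r / 2 - 1 / 2) / (1 / 2 - r / 2)) := by
        rw [integral_const_mul, integral_Ioi_rpow_of_lt hp hb, neg_div, ← div_neg]
        ring_nf

lemma setIntegral_IrIntegrand_Ioc_one_le (hlam : 0 ≤ lam) {b : ℝ} (hb : 0 < b) (hb1 : b ≤ 1) :
    ∫ t in Ioc b 1, IrIntegrand 1 lam t ≤ lam / 2 * log (1 / b) := by
  have hinv : ∀ t ∈ Ioc b 1, IrIntegrand 1 lam t ≤ lam / 2 * (1 / t) := fun t ht => by
    have h := IrIntegrand_le_mul_rpow (r := 1) hlam (hb.trans ht.1)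
    rwa [show (1 : ℝ) / 2 - 3 / 2 = -1 by norm_num, rpow_neg_one, ← one_div] at h
  have hcont : ContinuousOn (fun t : ℝ => lam / 2 * (1 / t)) (uIcc b 1) :=
    continuousOn_const.mul <| continuousOn_const.div continuousOn_id fun t ht =>
      (hb.trans_le (uIcc_of_le hb1 ▸ ht).1).ne'
  calc ∫ t in Ioc b 1, IrIntegrand 1 lam t ≤ ∫ t in Ioc b 1, lam / 2 * (1 / t) :=
        setIntegral_mono_of_nonneg (fun t ht => IrIntegrand_nonneg hlam (hb.trans ht.1))
          hinv hcont.intervalIntegrable.1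
    _ = lam / 2 * log (1 / b) := by
        rw [← intervalIntegral.integral_of_le hb1, intervalIntegral.integral_const_mul,
          integral_one_div_of_pos hb one_pos]

lemma setIntegral_IrIntegrand_Ioi_one_le (hr : r ≤ 3) (hlam : 0 ≤ lam) :
    ∫ t in Ioi 1, IrIntegrand r lam t ≤ lam / 2 := by
  have hexp : ∀ t ∈ Ioi (1 : ℝ), IrIntegrand r lam t ≤ lam / 2 * exp (-t) := fun t ht =>
    (IrIntegrand_le_mul_gammaIntegrand hlam (one_pos.trans ht)).trans <|
      mul_le_mul_of_nonneg_left (mul_le_of_le_one_right (exp_nonneg _)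
        (rpow_le_one_of_one_le_of_nonpos (le_of_lt ht) (by linarith))) (by positivity)
  calc ∫ t in Ioi 1, IrIntegrand r lam t ≤ ∫ t in Ioi 1, lam / 2 * exp (-t) :=
        setIntegral_mono_of_nonneg (fun t ht => IrIntegrand_nonneg hlam (one_pos.trans ht))
          hexp ((integrableOn_exp_neg_Ioi 1).const_mul _)
    _ = lam / 2 * exp (-1) := by rw [integral_const_mul, integral_exp_neg_Ioi]
    _ ≤ lam / 2 := mul_le_of_le_one_right (by positivity) (exp_le_one_iff.mpr (by norm_num))

end IrIntegrand

lemma Ir_le_of_lt_one {r lam : ℝ} (hr0 : 0 < r) (hr1 : r < 1) (hlam : 0 < lam) :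
    Ir r lam ≤ (2 / r + 1 / (1 - r)) * lam ^ r := by
  have hb : 0 < lam ^ 2 := by positivity
  have hsq : ∀ s : ℝ, (lam ^ 2) ^ (s / 2) = lam ^ s := fun s => by
    rw [← rpow_natCast, ← rpow_mul hlam.le]
    ring_nf
  have hnear := setIntegral_IrIntegrand_Ioc_zero_le hr0 hlam.le hb
  have hfar := setIntegral_IrIntegrand_Ioi_le_of_lt_one hr1 hlam.le hb
  rw [hsq] at hnear
  rw [show r / 2 - 1 / 2 = (r - 1) / 2 by ring, hsq, rpow_sub_one hlam.ne'] at hfar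
  rw [Ir_eq_integral_IrIntegrand, setIntegral_Ioi_eq_Ioc_add_Ioi hb.le
    (integrableOn_IrIntegrand hr0 hlam.le)]
  have hsub : (0 : ℝ) < 1 - r := by linarith
  calc _ ≤ lam ^ r / (r / 2) + lam / 2 * (lam ^ r / lam / (1 / 2 - r / 2)) :=
        add_le_add hnear hfar
    _ = (2 / r + 1 / (1 - r)) * lam ^ r := by field_simp

lemma half_le_log_one_div {x : ℝ} (hx0 : 0 < x) (hx : x ≤ 1 / 2) : 1 / 2 ≤ log (1 / x) :=
  calc (1 : ℝ) / 2 ≤ log 2 := by linarith [log_two_gt_d9]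
    _ ≤ log (1 / x) := log_le_log two_pos (by rw [le_div_iff₀ hx0]; linarith)

lemma Ir_one_le {lam : ℝ} (hlam : 0 < lam) (hlam1 : lam ≤ 1) :
    Ir 1 lam ≤ 5 / 2 * lam + lam * log (1 / lam) := by
  have hb : 0 < lam ^ 2 := by positivity
  have hb1 : lam ^ 2 ≤ 1 := pow_le_one₀ hlam.le hlam1
  have hint := integrableOn_IrIntegrand one_pos hlam.le
  rw [Ir_eq_integral_IrIntegrand, setIntegral_Ioi_eq_Ioc_add_Ioi hb.le hint,
    setIntegral_Ioi_eq_Ioc_add_Ioi hb1 (hint.mono_set (Ioi_subset_Ioi hb.le))]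
  have hnear := setIntegral_IrIntegrand_Ioc_zero_le one_pos hlam.le hb
  have hmid := setIntegral_IrIntegrand_Ioc_one_le hlam.le hb hb1
  have htail := setIntegral_IrIntegrand_Ioi_one_le (r := 1) (by norm_num) hlam.le
  rw [← rpow_natCast, ← rpow_mul hlam.le] at hnear
  rw [← one_div_pow, log_pow] at hmid
  norm_num at hnear
  push_cast at hmid
  linarith

/-- (i) for `0 < r < 1`, `I_r(λ) ≤ c(r) λ^r`; (ii) `I_1(λ) ≤ c λ log(1/λ)`;
(iii) for `r > 1`, `I_r(λ) ≤ c(r) λ`, all for `λ ∈ (0, 1/2]`. -/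
theorem stmt17 :
    (∀ r : ℝ, 0 < r → r < 1 → ∃ c : ℝ, 0 < c ∧
      ∀ lam ∈ Set.Ioc (0:ℝ) (1/2), Ir r lam ≤ c * lam ^ r) ∧
    (∃ c : ℝ, 0 < c ∧
      ∀ lam ∈ Set.Ioc (0:ℝ) (1/2), Ir 1 lam ≤ c * lam * Real.log (1 / lam)) ∧
    (∀ r : ℝ, 1 < r → ∃ c : ℝ, 0 < c ∧
      ∀ lam ∈ Set.Ioc (0:ℝ) (1/2), Ir r lam ≤ c * lam) := by
  refine ⟨fun r hr0 hr1 => ?_, ?_, fun r hr => ?_⟩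
  · have hsub : (0 : ℝ) < 1 - r := by linarith
    exact ⟨2 / r + 1 / (1 - r), by positivity, fun lam hlam => Ir_le_of_lt_one hr0 hr1 hlam.1⟩
  · refine ⟨6, by norm_num, fun lam ⟨hlam0, hlam⟩ => (Ir_one_le hlam0 (by linarith)).trans ?_⟩
    linarith [mul_le_mul_of_nonneg_left (half_le_log_one_div hlam0 hlam) hlam0.le]
  · refine ⟨Gamma (r / 2 - 1 / 2) / 2, div_pos (Gamma_pos_of_pos (by linarith)) two_pos,
      fun lam hlam => (Ir_le_of_one_lt hr hlam.1.le).trans_eq (by ring)⟩
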